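/- For any g ∈ L²([L]×X, P), define g_i(x) = g(i,x) and ḡ(i,j) = ∫_{X⁰} g(i,x) p_{(i,j)}(x)/P_{(i,j)}(X⁰) dx. Let Ē^J(ḡ,ḡ) = (1/(2θ)) ∑_{i=1}^L ∑_{j,j'=1}^n (ḡ(i,j) − ḡ(i,j'))² r_i w_{(i,j)} P_{(i,j)}(X⁰) M̄((i,j),(i,j')), where θ = P([L]×X⁰). Then Ē^J(ḡ,ḡ) ≤ (2(1−λ)/θ) ∑_{i=1}^L ∑_{j=1}^n ( r_i w_{(i,j)} / P_{(i,j)}(X⁰) ) Var_{P_{(i,j)},X⁰}(g_i), where Var_{P_{(i,j)},X⁰}(g_i) = (1/2) ∫_{X⁰}∫_{X⁰} (g_i(x)−g_i(y))² P_{(i,j)}(dx) P_{(i,j)}(dy). -/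

import Mathlib

/-!
Fix a level `i` and put `u_j = w_{(i,j)} p_{(i,j)}`, so that `p_i = ∑_j u_j` and the within-level
jump from `j` to `j'` has density `u_j u_{j'} / p_i`. Pointwise in `x`,
`(ḡ_j - ḡ_{j'})² ≤ 2 (g_i(x) - ḡ_j)² + 2 (g_i(x) - ḡ_{j'})²`, and `∑_{j'} u_{j'} / p_i ≤ 1`, so the
jump part is bounded by `4 ∑_j u_j (g_i - ḡ_j)²`. Integrating over `X⁰`, and using that `ḡ_j` is
the mean of `g_i` under `P_{(i,j)}` restricted to `X⁰`, turns `∫_{X⁰} (g_i - ḡ_j)² p_{(i,j)}` into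
`Var_{P_{(i,j)},X⁰}(g_i) / P_{(i,j)}(X⁰)`.
-/

open MeasureTheory Finset

noncomputable section

/-- Adjacency of temperature levels: `i' = i ± 1`. -/
def adjacent {L : ℕ} (i i' : Fin L) : Prop :=
  (i' : ℕ) = (i : ℕ) + 1 ∨ (i : ℕ) = (i' : ℕ) + 1

instance {L : ℕ} (i i' : Fin L) : Decidable (adjacent i i') := by
  unfold adjacent; infer_instance

/-- The `S`-restricted variance `(1/2) ∫_S ∫_S (g(b) - g(a))² Π(da) Π(db)`. -/
def restVar {Ω : Type*} [MeasurableSpace Ω] (Pi : Measure Ω) (S : Set Ω) (g : Ω → ℝ) : ℝ :=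
  (1 / 2) * ∫ a in S, (∫ b in S, (g b - g a) ^ 2 ∂Pi) ∂Pi

/-- The stationary measure of the simulated tempering chain: density `p(i,x) = rᵢ pᵢ(x)`. -/
def stStat {X : Type*} [MeasurableSpace X] (ν : Measure X) {L : ℕ}
    (r : Fin L → ℝ) (p : Fin L → X → ℝ) : Measure (Fin L × X) :=
  Measure.sum fun i =>
    ENNReal.ofReal (r i) • ((ν.withDensity fun x => ENNReal.ofReal (p i x)).map fun x => (i, x))

open scoped ENNReal

lemma sum_sum_sq_sub_mul_div_sum_le {ι : Type*} [Fintype ι] (a u : ι → ℝ)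
    (hu : ∀ j, 0 ≤ u j) (b : ℝ) :
    ∑ j, ∑ j', (a j - a j') ^ 2 * (u j * (u j' / ∑ k, u k))
      ≤ 4 * ∑ j, (b - a j) ^ 2 * u j := by
  set s := ∑ k, u k
  have hq : ∀ j, 0 ≤ u j / s := fun j => div_nonneg (hu j) (sum_nonneg fun k _ => hu k)
  let X : ι → ι → ℝ := fun j j' => 2 * (b - a j) ^ 2 * u j * (u j' / s)
  have hX : ∀ j j', (a j - a j') ^ 2 * (u j * (u j' / s)) ≤ X j j' + X j' j := fun j j' => by
    have hsq : (a j - a j') ^ 2 ≤ 2 * (b - a j) ^ 2 + 2 * (b - a j') ^ 2 := by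
      nlinarith [sq_nonneg (a j + a j' - 2 * b)]
    calc (a j - a j') ^ 2 * (u j * (u j' / s))
        ≤ (2 * (b - a j) ^ 2 + 2 * (b - a j') ^ 2) * (u j * (u j' / s)) :=
          mul_le_mul_of_nonneg_right hsq (mul_nonneg (hu j) (hq j'))
      _ = X j j' + X j' j := by simp only [X]; ring
  have hrow : ∀ j, ∑ j', X j j' ≤ 2 * (b - a j) ^ 2 * u j := fun j => by
    have hs : ∑ j', u j' / s ≤ 1 := by
      rw [← sum_div]
      exact div_self_le_one _
    simp only [X, ← mul_sum]
    exact mul_le_of_le_one_right (by have := hu j; positivity) hs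
  calc ∑ j, ∑ j', (a j - a j') ^ 2 * (u j * (u j' / s))
      ≤ ∑ j, ∑ j', (X j j' + X j' j) := by gcongr with j _ j' _; exact hX j j'
    _ = 2 * ∑ j, ∑ j', X j j' := by
        simp only [sum_add_distrib]
        rw [sum_comm (f := fun j j' => X j' j)]
        ring
    _ ≤ 2 * ∑ j, 2 * (b - a j) ^ 2 * u j := by gcongr with j _; exact hrow j
    _ = 4 * ∑ j, (b - a j) ^ 2 * u j := by
        rw [mul_sum, mul_sum]
        exact sum_congr rfl fun j _ => by ring

section Variance

variable {Ω : Type*} [MeasurableSpace Ω] {μ : Measure Ω} {f : Ω → ℝ}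

lemma integral_sub_const_sq [IsFiniteMeasure μ] (hf : MemLp f 2 μ) (c : ℝ) :
    ∫ x, (f x - c) ^ 2 ∂μ
      = ∫ x, f x ^ 2 ∂μ - 2 * c * ∫ x, f x ∂μ + c ^ 2 * μ.real Set.univ := by
  have hf1 : Integrable f μ := hf.integrable one_le_two
  have hf2 : Integrable (fun x => f x ^ 2) μ := hf.integrable_sq
  calc ∫ x, (f x - c) ^ 2 ∂μ = ∫ x, (f x ^ 2 - 2 * c * f x + c ^ 2) ∂μ := by
        congr 1; ext x; ring
    _ = _ := by
        rw [integral_add (f := fun x => f x ^ 2 - 2 * c * f x) (hf2.sub (hf1.const_mul _))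
            (integrable_const _), integral_sub hf2 (hf1.const_mul _), integral_const_mul,
          integral_const, smul_eq_mul]
        ring

/- `m` is the mean of `f` on `S`; multiplying it out keeps the null case `μ S = 0` clear of
division by zero. -/
lemma restVar_eq_measureReal_mul_integral_sq_sub {S : Set Ω} (hS : μ S ≠ ∞)
    (hf : MemLp f 2 (μ.restrict S)) {m : ℝ} (hm : μ.real S * m = ∫ x in S, f x ∂μ) :
    restVar μ S f = μ.real S * ∫ x in S, (f x - m) ^ 2 ∂μ := by
  have : IsFiniteMeasure (μ.restrict S) :=
    ⟨by rwa [Measure.restrict_apply_univ, lt_top_iff_ne_top]⟩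
  have hM : (μ.restrict S).real Set.univ = μ.real S := measureReal_restrict_apply_univ S
  have hf1 : Integrable f (μ.restrict S) := hf.integrable one_le_two
  have hf2 : Integrable (fun x => f x ^ 2) (μ.restrict S) := hf.integrable_sq
  set A := ∫ x in S, f x ^ 2 ∂μ
  set B := ∫ x in S, f x ∂μ
  have inner : ∀ a, ∫ b in S, (f b - f a) ^ 2 ∂μ = A - 2 * B * f a + μ.real S * f a ^ 2 := by
    intro a
    rw [integral_sub_const_sq hf, hM]
    ring
  simp_rw [restVar, inner]
  rw [integral_add (f := fun a => A - 2 * B * f a) ((integrable_const A).sub (hf1.const_mul _))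
      (hf2.const_mul _), integral_sub (integrable_const _) (hf1.const_mul _), integral_const_mul,
    integral_const_mul, integral_const, smul_eq_mul, hM, integral_sub_const_sq hf, hM]
  linear_combination (B - μ.real S * m) * hm

end Variance

section Density

variable {X : Type*} [MeasurableSpace X] {ν : Measure X} {ρ : X → ℝ} {S : Set X}

lemma withDensity_ofReal_apply_eq_ofReal_setIntegral (hρ : ∀ x, 0 ≤ ρ x)
    (hS : MeasurableSet S) (hρS : IntegrableOn ρ S ν) :
    (ν.withDensity fun x => ENNReal.ofReal (ρ x)) S = ENNReal.ofReal (∫ x in S, ρ x ∂ν) := by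
  rw [withDensity_apply _ hS, ofReal_integral_eq_lintegral_ofReal hρS (ae_of_all _ hρ)]

lemma setIntegral_withDensity_ofReal (hρm : Measurable ρ) (hρ : ∀ x, 0 ≤ ρ x)
    (hS : MeasurableSet S) (f : X → ℝ) :
    ∫ x in S, f x ∂(ν.withDensity fun x => ENNReal.ofReal (ρ x)) = ∫ x in S, f x * ρ x ∂ν := by
  rw [setIntegral_withDensity_eq_setIntegral_toReal_smul hρm.ennreal_ofReal
    (ae_of_all _ fun _ => ENNReal.ofReal_lt_top) f hS]
  simp only [ENNReal.toReal_ofReal (hρ _), smul_eq_mul, mul_comm]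

lemma integrableOn_sq_sub_mul_of_memLp_withDensity_ofReal (hρm : Measurable ρ)
    (hρ : ∀ x, 0 ≤ ρ x) (hS : MeasurableSet S) (hρS : IntegrableOn ρ S ν) {f : X → ℝ}
    (hf : MemLp f 2 ((ν.withDensity fun x => ENNReal.ofReal (ρ x)).restrict S)) (c : ℝ) :
    IntegrableOn (fun x => (f x - c) ^ 2 * ρ x) S ν := by
  have : IsFiniteMeasure ((ν.withDensity fun x => ENNReal.ofReal (ρ x)).restrict S) := ⟨by
    rw [Measure.restrict_apply_univ, withDensity_ofReal_apply_eq_ofReal_setIntegral hρ hS hρS]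
    exact ENNReal.ofReal_lt_top⟩
  have hint := (hf.sub (memLp_const c)).integrable_sq
  rw [restrict_withDensity hS, integrable_withDensity_iff hρm.ennreal_ofReal
    (ae_of_all _ fun _ => ENNReal.ofReal_lt_top)] at hint
  simpa only [IntegrableOn, Pi.sub_apply, ENNReal.toReal_ofReal (hρ _)] using hint

lemma restVar_withDensity_ofReal_eq (hρm : Measurable ρ) (hρ : ∀ x, 0 ≤ ρ x)
    (hS : MeasurableSet S) (hρS : IntegrableOn ρ S ν) {f : X → ℝ}
    (hf : MemLp f 2 ((ν.withDensity fun x => ENNReal.ofReal (ρ x)).restrict S)) {m : ℝ}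
    (hm : (∫ x in S, ρ x ∂ν) * m = ∫ x in S, f x * ρ x ∂ν) :
    restVar (ν.withDensity fun x => ENNReal.ofReal (ρ x)) S f
      = (∫ x in S, ρ x ∂ν) * ∫ x in S, (f x - m) ^ 2 * ρ x ∂ν := by
  have hμS := withDensity_ofReal_apply_eq_ofReal_setIntegral hρ hS hρS
  have hreal : (ν.withDensity fun x => ENNReal.ofReal (ρ x)).real S = ∫ x in S, ρ x ∂ν := by
    rw [measureReal_def, hμS, ENNReal.toReal_ofReal (setIntegral_nonneg hS fun x _ => hρ x)]
  rw [restVar_eq_measureReal_mul_integral_sq_sub (hμS ▸ ENNReal.ofReal_ne_top) hf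
      (by rwa [hreal, setIntegral_withDensity_ofReal hρm hρ hS]),
    hreal, setIntegral_withDensity_ofReal hρm hρ hS]

lemma MeasureTheory.MemLp.withDensity_ofReal_of_mul_le {q : ℝ≥0∞} {σ : X → ℝ} {c : ℝ}
    (hc : 0 < c) (hle : ∀ x, c * ρ x ≤ σ x) {f : X → ℝ}
    (hf : MemLp f q (ν.withDensity fun x => ENNReal.ofReal (σ x))) :
    MemLp f q (ν.withDensity fun x => ENNReal.ofReal (ρ x)) := by
  refine hf.of_measure_le_smul (c := ENNReal.ofReal c⁻¹) ENNReal.ofReal_ne_top ?_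
  rw [← withDensity_smul' _ _ ENNReal.ofReal_ne_top]
  refine withDensity_mono (ae_of_all _ fun x => ?_)
  rw [Pi.smul_apply, smul_eq_mul, ← ENNReal.ofReal_mul (inv_nonneg.mpr hc.le)]
  exact ENNReal.ofReal_le_ofReal ((le_inv_mul_iff₀ hc).mpr (hle x))

lemma MeasureTheory.MemLp.withDensity_of_stStat {L : ℕ} {r : Fin L → ℝ} {p : Fin L → X → ℝ}
    {g : Fin L × X → ℝ} {q : ℝ≥0∞} (hg : MemLp g q (stStat ν r p)) {i : Fin L} (hri : 0 < r i) :
    MemLp (fun x => g (i, x)) q (ν.withDensity fun x => ENNReal.ofReal (p i x)) := by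
  have hr0 : ENNReal.ofReal (r i) ≠ 0 := ENNReal.ofReal_pos.mpr hri |>.ne'
  have hslice : MemLp g q
      ((ν.withDensity fun x => ENNReal.ofReal (p i x)).map fun x => (i, x)) := by
    have h := (hg.mono_measure (Measure.le_sum _ i)).smul_measure (ENNReal.inv_ne_top.mpr hr0)
    rwa [smul_smul, ENNReal.inv_mul_cancel hr0 ENNReal.ofReal_ne_top, one_smul] at h
  exact (measurableEmbedding_prodMk_left i).memLp_map_measure_iff.mp hslice

end Density

section Mixture

variable {X : Type*} [MeasurableSpace X] {ν : Measure X} {S : Set X}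
  {ι : Type*} [Fintype ι] {w : ι → ℝ} {pc : ι → X → ℝ} {p : X → ℝ}

lemma setIntegral_mixture_jump_le (hw : ∀ j, 0 ≤ w j) (hpc0 : ∀ j x, 0 ≤ pc j x)
    (hpcm : ∀ j, Measurable (pc j)) (hp : ∀ x, p x = ∑ j, w j * pc j x)
    (hpcS : ∀ j, IntegrableOn (pc j) S ν) {f : X → ℝ} (a : ι → ℝ)
    (hf : ∀ j, 0 < w j → IntegrableOn (fun x => (f x - a j) ^ 2 * pc j x) S ν) :
    ∑ j, ∑ j', (a j - a j') ^ 2 * ∫ x in S, w j * pc j x * (w j' * pc j' x / p x) ∂ν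
      ≤ 4 * ∑ j, w j * ∫ x in S, (f x - a j) ^ 2 * pc j x ∂ν := by
  obtain rfl : p = fun x => ∑ j, w j * pc j x := funext hp
  have hu : ∀ j x, 0 ≤ w j * pc j x := fun j x => mul_nonneg (hw j) (hpc0 j x)
  have hq : ∀ j x, 0 ≤ w j * pc j x / ∑ k, w k * pc k x := fun j x =>
    div_nonneg (hu j x) (sum_nonneg fun k _ => hu k x)
  have hjump : ∀ j j', IntegrableOn
      (fun x => w j * pc j x * (w j' * pc j' x / ∑ k, w k * pc k x)) S ν := fun j j' => by
    refine ((hpcS j).const_mul (w j)).mono' (by fun_prop) (ae_of_all _ fun x => ?_)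
    rw [Real.norm_of_nonneg (mul_nonneg (hu j x) (hq j' x))]
    exact mul_le_of_le_one_right (hu j x) (div_le_one_of_le₀
      (single_le_sum (fun k _ => hu k x) (mem_univ j')) (sum_nonneg fun k _ => hu k x))
  have hvar : ∀ j, IntegrableOn (fun x => w j * ((f x - a j) ^ 2 * pc j x)) S ν := fun j => by
    rcases (hw j).eq_or_lt with h0 | hpos
    · simp [← h0]
    · exact (hf j hpos).const_mul _
  calc ∑ j, ∑ j', (a j - a j') ^ 2 *
        ∫ x in S, w j * pc j x * (w j' * pc j' x / ∑ k, w k * pc k x) ∂ν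
      = ∫ x in S, ∑ j, ∑ j', (a j - a j') ^ 2 *
          (w j * pc j x * (w j' * pc j' x / ∑ k, w k * pc k x)) ∂ν := by
        rw [integral_finsetSum _ fun j _ => integrable_finsetSum _ fun j' _ =>
          (hjump j j').const_mul _]
        refine sum_congr rfl fun j _ => ?_
        rw [integral_finsetSum _ fun j' _ => (hjump j j').const_mul _]
        simp only [integral_const_mul]
    _ ≤ ∫ x in S, 4 * ∑ j, (f x - a j) ^ 2 * (w j * pc j x) ∂ν := by
        refine integral_mono_of_nonneg (ae_of_all _ fun x => ?_) ?_ (ae_of_all _ fun x => ?_)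
        · exact sum_nonneg fun j _ => sum_nonneg fun j' _ =>
            mul_nonneg (sq_nonneg _) (mul_nonneg (hu j x) (hq j' x))
        · refine (integrable_finsetSum _ fun j _ => (hvar j).congr ?_).const_mul 4
          exact ae_of_all _ fun x => by ring
        · exact sum_sum_sq_sub_mul_div_sum_le a (fun j => w j * pc j x) (fun j => hu j x) (f x)
    _ = 4 * ∑ j, w j * ∫ x in S, (f x - a j) ^ 2 * pc j x ∂ν := by
        rw [integral_const_mul, integral_finsetSum _ fun j _ => (hvar j).congr
          (ae_of_all _ fun x => by ring)]
        congr 1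
        refine sum_congr rfl fun j _ => ?_
        rw [← integral_const_mul]
        exact integral_congr_ae (ae_of_all _ fun x => by ring)

lemma sum_jump_le_restVar (hw : ∀ j, 0 ≤ w j) (hpc0 : ∀ j x, 0 ≤ pc j x)
    (hpcm : ∀ j, Measurable (pc j)) (hp : ∀ x, p x = ∑ j, w j * pc j x) (hS : MeasurableSet S)
    (hpos : ∀ j, 0 < ∫ x in S, pc j x ∂ν) {f : X → ℝ}
    (hf : MemLp f 2 (ν.withDensity fun x => ENNReal.ofReal (p x)))
    {P : ι → ℝ} (hP : ∀ j, P j = ∫ x in S, pc j x ∂ν)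
    {a : ι → ℝ} (ha : ∀ j, a j = ∫ x in S, f x * (pc j x / P j) ∂ν) :
    ∑ j, ∑ j', (a j - a j') ^ 2 * (w j * P j) *
        ∫ x in S, pc j x / P j * (w j' * pc j' x / p x) ∂ν
      ≤ 4 * ∑ j, w j / P j * restVar (ν.withDensity fun x => ENNReal.ofReal (pc j x)) S f := by
  have hP0 : ∀ j, P j ≠ 0 := fun j => (hP j ▸ hpos j).ne'
  have hpcS : ∀ j, IntegrableOn (pc j) S ν := fun j =>
    Integrable.of_integral_ne_zero (hpos j).ne'
  have hfL2 : ∀ j, 0 < w j → MemLp f 2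
      ((ν.withDensity fun x => ENNReal.ofReal (pc j x)).restrict S) := fun j hwj =>
    (hf.withDensity_ofReal_of_mul_le hwj fun x => hp x ▸
      single_le_sum (fun k _ => mul_nonneg (hw k) (hpc0 k x)) (mem_univ j)).restrict S
  have hjump : ∀ j j', (w j * P j) * ∫ x in S, pc j x / P j * (w j' * pc j' x / p x) ∂ν
      = ∫ x in S, w j * pc j x * (w j' * pc j' x / p x) ∂ν := fun j j' => by
    rw [← integral_const_mul]
    exact integral_congr_ae (ae_of_all _ fun x => by field_simp [hP0 j])
  have hvar : ∀ j, w j * ∫ x in S, (f x - a j) ^ 2 * pc j x ∂ν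
      = w j / P j * restVar (ν.withDensity fun x => ENNReal.ofReal (pc j x)) S f := fun j => by
    rcases (hw j).eq_or_lt with h0 | hwj
    · simp [← h0]
    rw [restVar_withDensity_ofReal_eq (hpcm j) (hpc0 j) hS (hpcS j) (hfL2 j hwj) (m := a j), ← hP]
    · field_simp [hP0 j]
    · rw [ha, ← hP, ← integral_const_mul]
      exact integral_congr_ae (ae_of_all _ fun x => by field_simp [hP0 j])
  calc ∑ j, ∑ j', (a j - a j') ^ 2 * (w j * P j) *
        ∫ x in S, pc j x / P j * (w j' * pc j' x / p x) ∂ν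
      = ∑ j, ∑ j', (a j - a j') ^ 2 * ∫ x in S, w j * pc j x * (w j' * pc j' x / p x) ∂ν := by
        simp only [mul_assoc, hjump]
    _ ≤ 4 * ∑ j, w j * ∫ x in S, (f x - a j) ^ 2 * pc j x ∂ν :=
        setIntegral_mixture_jump_le hw hpc0 hpcm hp hpcS a fun j hwj =>
          integrableOn_sq_sub_mul_of_memLp_withDensity_ofReal (hpcm j) (hpc0 j) hS (hpcS j)
            (hfL2 j hwj) _
    _ = _ := by simp only [hvar]

end Mixture

theorem stmt2_general {X : Type*} [MeasurableSpace X] (ν : Measure X)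
    (L n : ℕ)
    (lam : ℝ) (hlam : lam ∈ Set.Ioo (0 : ℝ) 1)
    (r : Fin L → ℝ) (hr : ∀ i, 0 < r i)
    (w : Fin L → Fin n → ℝ) (hw : ∀ i j, 0 ≤ w i j)
    (pc : Fin L → Fin n → X → ℝ)
    (hpc0 : ∀ i j x, 0 ≤ pc i j x) (hpcm : ∀ i j, Measurable (pc i j))
    (X0 : Set X) (hX0 : MeasurableSet X0)
    (hpos : ∀ i j, 0 < ∫ x in X0, pc i j x ∂ν)
    (p : Fin L → X → ℝ) (hp : ∀ i x, p i x = ∑ j, w i j * pc i j x)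
    (PijX0 : Fin L → Fin n → ℝ) (hPij : ∀ i j, PijX0 i j = ∫ x in X0, pc i j x ∂ν)
    (θ : ℝ) (hθ : θ = ∑ i, r i * ∫ x in X0, p i x ∂ν)
    -- the function `g ∈ L²([L] × X, P)` and its projection `ḡ`
    (g : Fin L × X → ℝ) (hg : MemLp g 2 (stStat ν r p))
    (gbar : Fin L → Fin n → ℝ)
    (hgbar : ∀ i j, gbar i j = ∫ x in X0, g (i, x) * (pc i j x / PijX0 i j) ∂ν)
    -- the within-level part `Ē^J` of the Dirichlet form of the projected chain
    (EJ : ℝ)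
    (hEJ : EJ = (1 / (2 * θ)) * ∑ i : Fin L, ∑ j : Fin n, ∑ j' : Fin n,
      (gbar i j - gbar i j') ^ 2 * (r i * w i j * PijX0 i j) *
        ((1 - lam) * ∫ x in X0, (pc i j x / PijX0 i j) *
          (w i j' * pc i j' x / p i x) ∂ν)) :
    EJ ≤ (2 * (1 - lam) / θ) * ∑ i : Fin L, ∑ j : Fin n,
      (r i * w i j / PijX0 i j) *
        restVar (ν.withDensity fun x => ENNReal.ofReal (pc i j x)) X0 (fun x => g (i, x)) := by
  have hθ0 : 0 ≤ θ := hθ ▸ sum_nonneg fun i _ => mul_nonneg (hr i).le <|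
    setIntegral_nonneg hX0 fun x _ => hp i x ▸
      sum_nonneg fun j _ => mul_nonneg (hw i j) (hpc0 i j x)
  have hlam1 : 0 ≤ 1 - lam := sub_nonneg.mpr hlam.2.le
  have hlevel := fun i => sum_jump_le_restVar (hw i) (hpc0 i) (hpcm i) (hp i) hX0 (hpos i)
    (hg.withDensity_of_stStat (hr i)) (hPij i) (hgbar i)
  rw [hEJ]
  calc 1 / (2 * θ) * ∑ i, ∑ j, ∑ j', (gbar i j - gbar i j') ^ 2 * (r i * w i j * PijX0 i j) *
        ((1 - lam) * ∫ x in X0, (pc i j x / PijX0 i j) * (w i j' * pc i j' x / p i x) ∂ν)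
      = 1 / (2 * θ) * ∑ i, r i * (1 - lam) * ∑ j, ∑ j',
          (gbar i j - gbar i j') ^ 2 * (w i j * PijX0 i j) *
            ∫ x in X0, pc i j x / PijX0 i j * (w i j' * pc i j' x / p i x) ∂ν := by
        simp only [mul_sum]
        exact sum_congr rfl fun i _ => sum_congr rfl fun j _ => sum_congr rfl fun j' _ => by ring
    _ ≤ 1 / (2 * θ) * ∑ i, r i * (1 - lam) * (4 * ∑ j, w i j / PijX0 i j *
          restVar (ν.withDensity fun x => ENNReal.ofReal (pc i j x)) X0 (fun x => g (i, x))) := by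
        gcongr with i
        · exact mul_nonneg (hr i).le hlam1
        · exact hlevel i
    _ = _ := by
        simp only [mul_sum]
        exact sum_congr rfl fun i _ => sum_congr rfl fun j _ => by ring

theorem stmt2 {X : Type*} [MeasurableSpace X] (ν : Measure X)
    (L n : ℕ) (hL : 2 ≤ L) (hn : 0 < n)
    (lam : ℝ) (hlam : lam ∈ Set.Ioo (0 : ℝ) 1)
    (r : Fin L → ℝ) (hr : ∀ i, 0 < r i) (hr1 : ∑ i, r i = 1)
    (w : Fin L → Fin n → ℝ) (hw : ∀ i j, 0 ≤ w i j) (hw1 : ∀ i, ∑ j, w i j = 1)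
    (pc : Fin L → Fin n → X → ℝ)
    (hpc0 : ∀ i j x, 0 ≤ pc i j x) (hpcm : ∀ i j, Measurable (pc i j))
    (hpc1 : ∀ i j, ∫ x, pc i j x ∂ν = 1)
    (X0 : Set X) (hX0 : MeasurableSet X0)
    (hpos : ∀ i j, 0 < ∫ x in X0, pc i j x ∂ν)
    (p : Fin L → X → ℝ) (hp : ∀ i x, p i x = ∑ j, w i j * pc i j x)
    (PijX0 : Fin L → Fin n → ℝ) (hPij : ∀ i j, PijX0 i j = ∫ x in X0, pc i j x ∂ν)
    (θ : ℝ) (hθ : θ = ∑ i, r i * ∫ x in X0, p i x ∂ν)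
    -- the function `g ∈ L²([L] × X, P)` and its projection `ḡ`
    (g : Fin L × X → ℝ) (hgm : Measurable g) (hg : MemLp g 2 (stStat ν r p))
    (gbar : Fin L → Fin n → ℝ)
    (hgbar : ∀ i j, gbar i j = ∫ x in X0, g (i, x) * (pc i j x / PijX0 i j) ∂ν)
    -- the within-level part `Ē^J` of the Dirichlet form of the projected chain
    (EJ : ℝ)
    (hEJ : EJ = (1 / (2 * θ)) * ∑ i : Fin L, ∑ j : Fin n, ∑ j' : Fin n,
      (gbar i j - gbar i j') ^ 2 * (r i * w i j * PijX0 i j) *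
        ((1 - lam) * ∫ x in X0, (pc i j x / PijX0 i j) *
          (w i j' * pc i j' x / p i x) ∂ν)) :
    EJ ≤ (2 * (1 - lam) / θ) * ∑ i : Fin L, ∑ j : Fin n,
      (r i * w i j / PijX0 i j) *
        restVar (ν.withDensity fun x => ENNReal.ofReal (pc i j x)) X0 (fun x => g (i, x)) :=
  stmt2_general ν L n lam hlam r hr w hw pc hpc0 hpcm X0 hX0 hpos p hp PijX0 hPij θ hθ g hg gbar
    hgbar EJ hEJ
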